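/- arXiv:1403.0076 — 4 statements merged into one kernel-verified Lean document; each statement's English description precedes it below -/
import Mathlib

section
/- Let g be a positive decreasing function on (0,∞). Suppose there exists a function φ > 0 on (0,1) with ∫₀¹ γ^(d-1) φ(γ) dγ < ∞ and g(γr) ≤ φ(γ) g(r) for all γ ∈ (0,1) and r > 0. Then there exists a constant C ≥ 1 such that d ∫₀^r s^(d-1) g(s) ds ≤ C r^d g(r) for every r > 0. -/
open MeasureTheory Set

theorem stmt_0 (d : ℕ) (hd : 1 ≤ d) (g φ : ℝ → ℝ)
    (hg_pos : ∀ r : ℝ, 0 < r → 0 < g r)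
    (hg_dec : ∀ ⦃r s : ℝ⦄, 0 < r → r ≤ s → g s ≤ g r)
    (hφ_pos : ∀ γ ∈ Set.Ioo (0:ℝ) 1, 0 < φ γ)
    (hφ_int : IntegrableOn (fun γ : ℝ => γ ^ (d - 1) * φ γ) (Set.Ioo 0 1))
    (hgφ : ∀ γ ∈ Set.Ioo (0:ℝ) 1, ∀ r : ℝ, 0 < r → g (γ * r) ≤ φ γ * g r) :
    ∃ C : ℝ, 1 ≤ C ∧ ∀ r : ℝ, 0 < r →
      (d : ℝ) * ∫ s in Set.Ioo (0:ℝ) r, s ^ (d - 1) * g s ≤ C * (r ^ d * g r) := by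
  set I : ℝ := ∫ γ in Set.Ioo (0:ℝ) 1, γ ^ (d - 1) * φ γ with hI
  have hI_nonneg : 0 ≤ I := by
    apply setIntegral_nonneg measurableSet_Ioo
    intro γ hγ
    exact mul_nonneg (pow_nonneg (le_of_lt hγ.1) _) (le_of_lt (hφ_pos γ hγ))
  refine ⟨max 1 ((d : ℝ) * I), le_max_left _ _, ?_⟩
  intro r hr
  have key : (∫ s in Set.Ioo (0:ℝ) r, s ^ (d - 1) * g s) ≤ r * (r ^ (d-1) * g r * I) := by
    have h1 : (∫ s in Set.Ioo (0:ℝ) r, s ^ (d - 1) * g s)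
        = r * ∫ γ in Set.Ioo (0:ℝ) 1, (r * γ) ^ (d - 1) * g (r * γ) := by
      have := intervalIntegral.integral_comp_mul_left
        (a := (0:ℝ)) (b := 1) (fun s => s ^ (d - 1) * g s) (ne_of_gt hr)
      simp only [mul_zero, mul_one] at this
      rw [intervalIntegral.integral_of_le (le_of_lt hr),
        MeasureTheory.integral_Ioc_eq_integral_Ioo] at this
      rw [intervalIntegral.integral_of_le (by norm_num : (0:ℝ) ≤ 1),
        MeasureTheory.integral_Ioc_eq_integral_Ioo] at this
      rw [this, smul_eq_mul]
      field_simp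
    rw [h1]
    have h2 : (∫ γ in Set.Ioo (0:ℝ) 1, (r * γ) ^ (d - 1) * g (r * γ))
        ≤ ∫ γ in Set.Ioo (0:ℝ) 1, r ^ (d-1) * g r * (γ ^ (d - 1) * φ γ) := by
      apply MeasureTheory.integral_mono_of_nonneg
      · filter_upwards [ae_restrict_mem measurableSet_Ioo] with γ hγ
        exact mul_nonneg (pow_nonneg (mul_nonneg hr.le hγ.1.le) _)
          (le_of_lt (hg_pos _ (mul_pos hr hγ.1)))
      · exact hφ_int.const_mul _
      · filter_upwards [ae_restrict_mem measurableSet_Ioo] with γ hγ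
        have hgb : g (r * γ) ≤ φ γ * g r := by
          rw [mul_comm]; exact hgφ γ hγ r hr
        calc (r * γ) ^ (d - 1) * g (r * γ)
            ≤ (r * γ) ^ (d - 1) * (φ γ * g r) :=
              mul_le_mul_of_nonneg_left hgb (pow_nonneg (mul_nonneg hr.le hγ.1.le) _)
          _ = r ^ (d-1) * g r * (γ ^ (d - 1) * φ γ) := by rw [mul_pow]; ring
    have h3 : (∫ γ in Set.Ioo (0:ℝ) 1, r ^ (d-1) * g r * (γ ^ (d - 1) * φ γ))
        = r ^ (d-1) * g r * I := by
      rw [hI, MeasureTheory.integral_const_mul]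
    exact mul_le_mul_of_nonneg_left (h3 ▸ h2) hr.le
  have hrd : r * (r ^ (d - 1) * g r * I) = I * (r ^ d * g r) := by
    have : r * r ^ (d - 1) = r ^ d := by
      rw [← pow_succ']
      congr 1
      omega
    calc r * (r ^ (d - 1) * g r * I) = (r * r ^ (d - 1)) * g r * I := by ring
      _ = I * (r ^ d * g r) := by rw [this]; ring
  calc (d : ℝ) * ∫ s in Set.Ioo (0:ℝ) r, s ^ (d - 1) * g s
      ≤ (d : ℝ) * (r * (r ^ (d-1) * g r * I)) :=
        mul_le_mul_of_nonneg_left key (Nat.cast_nonneg d)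
    _ = ((d : ℝ) * I) * (r ^ d * g r) := by rw [hrd]; ring
    _ ≤ max 1 ((d : ℝ) * I) * (r ^ d * g r) :=
        mul_le_mul_of_nonneg_right (le_max_right _ _)
          (mul_nonneg (pow_nonneg hr.le _) (hg_pos r hr).le)
end

section
/- Suppose there exists a constant C ≥ 1 such that for all r > 0 and 0 < γ ≤ 1, C^(-1) γ^(2-d) g(r) ≤ g(γr) ≤ C γ^(α-d) g(r), where 0 < α < d and g is positive and decreasing on (0,∞). Then: (a) there exists C' ≥ 1 with d ∫₀^r s^(d-1) g(s) ds ≤ C' r^d g(r) for all r > 0; and (b) if d ≥ 3, there exist K > 1, η ∈ (0,1) with g(Kr) ≤ η g(r) for all r > 0. -/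
open MeasureTheory Set

theorem stmt_10 (d : ℕ) (hd : 1 ≤ d) (α : ℝ) (hα : 0 < α) (hαd : α < (d : ℝ))
    (g : ℝ → ℝ)
    (hg_pos : ∀ r : ℝ, 0 < r → 0 < g r)
    (hg_dec : ∀ ⦃r s : ℝ⦄, 0 < r → r ≤ s → g s ≤ g r)
    (C : ℝ) (hC : 1 ≤ C)
    (hlow : ∀ r : ℝ, 0 < r → ∀ γ : ℝ, 0 < γ → γ ≤ 1 →
      C⁻¹ * γ ^ ((2 : ℝ) - (d : ℝ)) * g r ≤ g (γ * r))
    (hup : ∀ r : ℝ, 0 < r → ∀ γ : ℝ, 0 < γ → γ ≤ 1 →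
      g (γ * r) ≤ C * γ ^ (α - (d : ℝ)) * g r) :
    (∃ C' : ℝ, 1 ≤ C' ∧ ∀ r : ℝ, 0 < r →
        (d : ℝ) * ∫ s in Set.Ioo (0:ℝ) r, s ^ (d - 1) * g s ≤ C' * (r ^ d * g r)) ∧
    (3 ≤ d → ∃ K η : ℝ, 1 < K ∧ 0 < η ∧ η < 1 ∧
        ∀ r : ℝ, 0 < r → g (K * r) ≤ η * g r) := by
  have hC0 : 0 < C := lt_of_lt_of_le one_pos hC
  constructor
  · refine ⟨max 1 ((d : ℝ) * C / α), le_max_left _ _, ?_⟩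
    intro r hr
    have hrd : (0:ℝ) < r ^ d * g r := mul_pos (pow_pos hr d) (hg_pos r hr)
    have hInt0 : IntegrableOn (fun s : ℝ => s ^ (α - 1)) (Ioo (0:ℝ) r) := by
      have := (intervalIntegral.intervalIntegrable_rpow' (a := 0) (b := r)
        (r := α - 1) (by linarith)).1
      exact this.mono_set Ioo_subset_Ioc_self
    have hInt : IntegrableOn
        (fun s : ℝ => C * r ^ ((d:ℝ) - α) * g r * s ^ (α - 1)) (Ioo (0:ℝ) r) :=
      hInt0.const_mul _
    have hle : ∀ s ∈ Ioo (0:ℝ) r,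
        s ^ (d - 1) * g s ≤ C * r ^ ((d:ℝ) - α) * g r * s ^ (α - 1) := by
      rintro s ⟨hs0, hsr⟩
      have h1 := hup r hr (s / r) (div_pos hs0 hr) ((div_le_one hr).2 hsr.le)
      rw [div_mul_cancel₀ s hr.ne'] at h1
      have h2 : (s / r) ^ (α - (d:ℝ)) = s ^ (α - (d:ℝ)) * r ^ ((d:ℝ) - α) := by
        rw [Real.div_rpow hs0.le hr.le, div_eq_mul_inv, ← Real.rpow_neg hr.le]
        ring_nf
      have h3 : (s:ℝ) ^ (d - 1) = s ^ ((d:ℝ) - 1) := by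
        rw [← Real.rpow_natCast s (d - 1)]
        congr 1
        push_cast [Nat.cast_sub hd]
        ring
      calc s ^ (d - 1) * g s ≤ s ^ (d - 1) * (C * (s/r) ^ (α - (d:ℝ)) * g r) :=
            mul_le_mul_of_nonneg_left h1 (pow_nonneg hs0.le _)
        _ = C * r ^ ((d:ℝ) - α) * g r * s ^ (α - 1) := by
            rw [h3, h2, show α - 1 = ((d:ℝ) - 1) + (α - (d:ℝ)) by ring,
              Real.rpow_add hs0]
            ring
    have hnonneg : ∀ᵐ s ∂(volume.restrict (Ioo (0:ℝ) r)),
        0 ≤ s ^ (d - 1) * g s := by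
      filter_upwards [ae_restrict_mem measurableSet_Ioo] with s hs
      exact mul_nonneg (pow_nonneg hs.1.le _) (hg_pos s hs.1).le
    have hae : ∀ᵐ s ∂(volume.restrict (Ioo (0:ℝ) r)),
        s ^ (d - 1) * g s ≤ C * r ^ ((d:ℝ) - α) * g r * s ^ (α - 1) := by
      filter_upwards [ae_restrict_mem measurableSet_Ioo] with s hs
      exact hle s hs
    have hmono := integral_mono_of_nonneg hnonneg hInt hae
    have hval : ∫ s in Ioo (0:ℝ) r, C * r ^ ((d:ℝ) - α) * g r * s ^ (α - 1)
        = C * r ^ ((d:ℝ) - α) * g r * (r ^ α / α) := by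
      rw [MeasureTheory.integral_const_mul]
      congr 1
      rw [← integral_Ioc_eq_integral_Ioo, ← intervalIntegral.integral_of_le hr.le,
        integral_rpow (Or.inl (by linarith))]
      rw [sub_add_cancel, Real.zero_rpow hα.ne']
      ring
    rw [hval] at hmono
    have hrr : r ^ ((d:ℝ) - α) * r ^ α = r ^ d := by
      rw [← Real.rpow_add hr, sub_add_cancel, Real.rpow_natCast]
    have hpow : C * r ^ ((d:ℝ) - α) * g r * (r ^ α / α) = (C / α) * (r ^ d * g r) := by
      calc C * r ^ ((d:ℝ) - α) * g r * (r ^ α / α)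
          = (C / α) * ((r ^ ((d:ℝ) - α) * r ^ α) * g r) := by ring
        _ = (C / α) * (r ^ d * g r) := by rw [hrr]
    rw [hpow] at hmono
    calc (d:ℝ) * ∫ s in Ioo (0:ℝ) r, s ^ (d - 1) * g s
        ≤ (d:ℝ) * ((C / α) * (r ^ d * g r)) :=
          mul_le_mul_of_nonneg_left hmono (Nat.cast_nonneg d)
      _ = ((d:ℝ) * C / α) * (r ^ d * g r) := by ring
      _ ≤ max 1 ((d : ℝ) * C / α) * (r ^ d * g r) :=
          mul_le_mul_of_nonneg_right (le_max_right _ _) hrd.le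
  · intro hd3
    refine ⟨2 * C, 1/2, by linarith, by norm_num, by norm_num, ?_⟩
    intro r hr
    set K := 2 * C with hK
    have hK1 : (1:ℝ) < K := by rw [hK]; linarith
    have hKpos : (0:ℝ) < K := by linarith
    have h := hlow (K * r) (mul_pos hKpos hr) K⁻¹ (inv_pos.2 hKpos)
      (inv_le_one_of_one_le₀ hK1.le)
    rw [inv_mul_cancel_left₀ hKpos.ne'] at h
    have hinv : (K⁻¹ : ℝ) ^ ((2:ℝ) - (d:ℝ)) = K ^ ((d:ℝ) - 2) := by
      rw [← Real.rpow_neg_one K, ← Real.rpow_mul hKpos.le]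
      congr 1
      ring
    rw [hinv] at h
    set P := K ^ ((d:ℝ) - 2) with hP
    have hP0 : (0:ℝ) < P := Real.rpow_pos_of_pos hKpos _
    have hd3' : (3:ℝ) ≤ (d:ℝ) := by exact_mod_cast hd3
    have hPK : K ≤ P := by
      calc K = K ^ (1:ℝ) := (Real.rpow_one K).symm
        _ ≤ K ^ ((d:ℝ) - 2) := Real.rpow_le_rpow_of_exponent_le hK1.le (by linarith)
    have hg1 : g (K * r) ≤ C * P⁻¹ * g r := by
      have h' := mul_le_mul_of_nonneg_left h
        (mul_pos hC0 (inv_pos.2 hP0)).le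
      calc g (K * r) = (C * P⁻¹) * (C⁻¹ * P * g (K * r)) := by
            field_simp
        _ ≤ (C * P⁻¹) * g r := h'
    have hCP : C * P⁻¹ ≤ 1/2 := by
      have h1 : P⁻¹ ≤ K⁻¹ := inv_anti₀ hKpos hPK
      have h2 : C * P⁻¹ ≤ C * K⁻¹ := mul_le_mul_of_nonneg_left h1 hC0.le
      have h3 : C * K⁻¹ = 1/2 := by rw [hK]; field_simp
      linarith
    calc g (K * r) ≤ C * P⁻¹ * g r := hg1
      _ ≤ (1/2) * g r := mul_le_mul_of_nonneg_right hCP (hg_pos r hr).le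
end

section
/- Let (X, E) be a structure in which E is a convex cone of functions X → [0,∞] containing the constant function 1, closed under the operation v ↦ v - γ when v ≥ γ for a constant γ ≥ 0 (i.e., if v ∈ E and v ≥ γ then v - γ ∈ E). For a set A ⊆ X define R₁^A := inf { v ∈ E : v ≥ 1 on A } pointwise, and assume R₁^A ∈ E. Then either R₁^A = 1 identically on X, or inf_{x ∈ X} R₁^A(x) = 0. -/
/-!
Let `γ = inf R₁^A < 1`. Since `R₁^A ≥ γ`, the function `(1 - γ)⁻¹ (R₁^A - γ)` lies in the cone and
is `≥ 1` on `A`, so it dominates `R₁^A`; that is, `(1 - γ) R₁^A + γ ≤ R₁^A`. Taking the infimum over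
`X` gives `(1 - γ) γ + γ ≤ γ`, and hence `γ = 0`.
-/

open scoped ENNReal

theorem ENNReal.iInf_eq_zero_of_mul_add_iInf_le {ι : Sort*} {f : ι → ℝ≥0∞} {c : ℝ≥0∞}
    (hc₀ : c ≠ 0) (hc : c ≠ ∞) (hf : iInf f ≠ ∞) (h : ∀ i, c * f i + iInf f ≤ f i) :
    iInf f = 0 := by
  have hle : c * iInf f + iInf f ≤ 0 + iInf f := by
    rw [ENNReal.mul_iInf_of_ne hc₀ hc, ENNReal.iInf_add, zero_add]
    exact iInf_mono h
  simpa [hc₀] using ENNReal.le_of_add_le_add_right hf hle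

section ReducedFunction

variable {X : Type*} {E : Set (X → ℝ≥0∞)} {A : Set X}

/-- The reduced function `R₁^A` of the constant `1` on `A` with respect to the cone `E`. -/
noncomputable def reducedFunction (E : Set (X → ℝ≥0∞)) (A : Set X) : X → ℝ≥0∞ :=
  fun x => ⨅ v ∈ {v ∈ E | ∀ a ∈ A, 1 ≤ v a}, v x

theorem reducedFunction_le {v : X → ℝ≥0∞} (hv : v ∈ E) (hvA : ∀ a ∈ A, 1 ≤ v a) (x : X) :
    reducedFunction E A x ≤ v x :=
  iInf₂_le v ⟨hv, hvA⟩

theorem one_le_reducedFunction {a : X} (ha : a ∈ A) : 1 ≤ reducedFunction E A a :=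
  le_iInf₂ fun _ hv => hv.2 a ha

theorem reducedFunction_le_one (h1 : (fun _ => (1 : ℝ≥0∞)) ∈ E) (x : X) :
    reducedFunction E A x ≤ 1 :=
  reducedFunction_le h1 (fun _ _ => le_rfl) x

theorem mul_reducedFunction_add_le
    (hsmul : ∀ v ∈ E, ∀ c : ℝ≥0∞, (fun x => c * v x) ∈ E)
    (hsub : ∀ v ∈ E, ∀ γ : ℝ≥0∞, (∀ x, γ ≤ v x) → (fun x => v x - γ) ∈ E)
    (hRE : reducedFunction E A ∈ E) {γ : ℝ≥0∞} (hγ : γ < 1)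
    (hγR : ∀ x, γ ≤ reducedFunction E A x) (x : X) :
    (1 - γ) * reducedFunction E A x + γ ≤ reducedFunction E A x := by
  set R := reducedFunction E A
  have hc₀ : 1 - γ ≠ 0 := (tsub_pos_of_lt hγ).ne'
  have hc : 1 - γ ≠ ∞ := ENNReal.sub_ne_top ENNReal.one_ne_top
  have hwA : ∀ a ∈ A, 1 ≤ (1 - γ)⁻¹ * (R a - γ) := fun a ha =>
    calc 1 = (1 - γ)⁻¹ * (1 - γ) := (ENNReal.inv_mul_cancel hc₀ hc).symm
      _ ≤ (1 - γ)⁻¹ * (R a - γ) := by gcongr; exact one_le_reducedFunction ha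
  have hRw : R x ≤ (1 - γ)⁻¹ * (R x - γ) :=
    reducedFunction_le (hsmul _ (hsub R hRE γ hγR) _) hwA x
  have hmul : (1 - γ) * R x ≤ R x - γ :=
    calc (1 - γ) * R x ≤ (1 - γ) * ((1 - γ)⁻¹ * (R x - γ)) := by gcongr
      _ = R x - γ := by rw [← mul_assoc, ENNReal.mul_inv_cancel hc₀ hc, one_mul]
  exact (ENNReal.le_sub_iff_add_le_right (hγ.trans ENNReal.one_lt_top).ne (hγR x)).mp hmul

end ReducedFunction

theorem stmt_11_general {X : Type*} (E : Set (X → ℝ≥0∞))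
    (h1 : (fun _ => (1 : ℝ≥0∞)) ∈ E)
    (hsmul : ∀ v ∈ E, ∀ c : ℝ≥0∞, (fun x => c * v x) ∈ E)
    (hsub : ∀ v ∈ E, ∀ γ : ℝ≥0∞, (∀ x, γ ≤ v x) → (fun x => v x - γ) ∈ E)
    (A : Set X) (R : X → ℝ≥0∞)
    (hR : R = fun x => ⨅ v ∈ {v ∈ E | ∀ a ∈ A, 1 ≤ v a}, v x)
    (hRE : R ∈ E) :
    (∀ x, R x = 1) ∨ (⨅ x, R x = 0) := by
  change R = reducedFunction E A at hR
  subst hR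
  by_cases hone : ∀ x, reducedFunction E A x = 1
  · exact Or.inl hone
  right
  obtain ⟨x₀, hx₀⟩ := not_forall.mp hone
  have hγ : ⨅ x, reducedFunction E A x < 1 :=
    (iInf_le _ x₀).trans_lt ((reducedFunction_le_one h1 x₀).lt_of_ne hx₀)
  exact ENNReal.iInf_eq_zero_of_mul_add_iInf_le (tsub_pos_of_lt hγ).ne'
    (ENNReal.sub_ne_top ENNReal.one_ne_top) (hγ.trans ENNReal.one_lt_top).ne
    (mul_reducedFunction_add_le hsmul hsub hRE hγ (iInf_le _))

theorem stmt_11 {X : Type*} (E : Set (X → ℝ≥0∞))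
    (h1 : (fun _ => (1 : ℝ≥0∞)) ∈ E)
    (hadd : ∀ v ∈ E, ∀ w ∈ E, v + w ∈ E)
    (hsmul : ∀ v ∈ E, ∀ c : ℝ≥0∞, (fun x => c * v x) ∈ E)
    (hsub : ∀ v ∈ E, ∀ γ : ℝ≥0∞, (∀ x, γ ≤ v x) → (fun x => v x - γ) ∈ E)
    (A : Set X) (R : X → ℝ≥0∞)
    (hR : R = fun x => ⨅ v ∈ {v ∈ E | ∀ a ∈ A, 1 ≤ v a}, v x)
    (hRE : R ∈ E) :
    (∀ x, R x = 1) ∨ (⨅ x, R x = 0) :=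
  stmt_11_general E h1 hsmul hsub A R hR hRE
end

section
/- Let G : ℝ^d × ℝ^d → (0,∞], G(x,y) = g(|x−y|), with g positive decreasing and doubling: g(r/2) ≤ c g(r) for r > R₀. Let Z ⊂ ℝ^d be finite, r_z > R₀ (z ∈ Z) with B(z,r_z) ∩ B(z',3r_{z'}) = ∅ for z ≠ z'. For each z let μ_z, ν_z be finite measures on closure(B(z,r_z)) with total masses ‖μ_z‖ ≤ ‖ν_z‖. Then for every z ∈ Z and every x ∈ closure(B(z,r_z)), ∑_{z' ≠ z} ∫ G(x,y) dμ_{z'}(y) ≤ c ∑_{z' ≠ z} ∫ G(x,y) dν_{z'}(y). -/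
open Metric MeasureTheory
open scoped ENNReal

attribute [local instance] Classical.propDecidable

theorem stmt_14 (d : ℕ) (hd : 1 ≤ d) (g : ℝ → ℝ) (R₀ c : ℝ)
    (hR₀ : 0 ≤ R₀) (hc : 1 ≤ c)
    (hg_pos : ∀ r : ℝ, 0 < r → 0 < g r)
    (hg_dec : ∀ ⦃r s : ℝ⦄, 0 < r → r ≤ s → g s ≤ g r)
    (hdbl : ∀ r : ℝ, R₀ < r → g (r / 2) ≤ c * g r)
    (Z : Finset (EuclideanSpace ℝ (Fin d))) (r : EuclideanSpace ℝ (Fin d) → ℝ)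
    (hr : ∀ z ∈ Z, R₀ < r z)
    (hdisj : ∀ z ∈ Z, ∀ z' ∈ Z, z ≠ z' →
      Disjoint (ball z (r z)) (ball z' (3 * r z')))
    (μ ν : EuclideanSpace ℝ (Fin d) → Measure (EuclideanSpace ℝ (Fin d)))
    (hμfin : ∀ z ∈ Z, IsFiniteMeasure (μ z)) (hνfin : ∀ z ∈ Z, IsFiniteMeasure (ν z))
    (hμsupp : ∀ z ∈ Z, μ z (closedBall z (r z))ᶜ = 0)
    (hνsupp : ∀ z ∈ Z, ν z (closedBall z (r z))ᶜ = 0)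
    (hmass : ∀ z ∈ Z, μ z Set.univ ≤ ν z Set.univ) :
    ∀ z ∈ Z, ∀ x ∈ closedBall z (r z),
      ∑ z' ∈ Z.erase z, ∫⁻ y, ENNReal.ofReal (g (dist x y)) ∂(μ z')
        ≤ ENNReal.ofReal c *
          ∑ z' ∈ Z.erase z, ∫⁻ y, ENNReal.ofReal (g (dist x y)) ∂(ν z') := by
  intro z hz x hx
  rw [Finset.mul_sum]
  refine Finset.sum_le_sum fun z' hz' => ?_
  obtain ⟨hne, hz'Z⟩ := Finset.mem_erase.mp hz'
  have hrz' : R₀ < r z' := hr z' hz'Z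
  have hrz'pos : 0 < r z' := lt_of_le_of_lt hR₀ hrz'
  have hrzpos : 0 < r z := lt_of_le_of_lt hR₀ (hr z hz)
  -- separation of centers
  have hsep : r z + 3 * r z' ≤ dist z z' := by
    by_contra h
    push_neg at h
    have hzz' : z ≠ z' := fun he => hne he.symm
    have hd := hdisj z hz z' hz'Z hzz'
    set t : ℝ := r z / (r z + 3 * r z') with ht
    have hsum : 0 < r z + 3 * r z' := by nlinarith
    have ht0 : 0 < t := div_pos hrzpos hsum
    have ht1 : t < 1 := (div_lt_one hsum).mpr (by nlinarith)
    set p := AffineMap.lineMap z z' t with hp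
    have hpz : dist p z = t * dist z z' := by
      rw [hp, dist_lineMap_left, Real.norm_eq_abs, abs_of_pos ht0]
    have hpz' : dist p z' = (1 - t) * dist z z' := by
      rw [hp, dist_lineMap_right, Real.norm_eq_abs, abs_of_pos (by linarith)]
    have h1 : p ∈ ball z (r z) := by
      rw [mem_ball, hpz]
      calc t * dist z z' < t * (r z + 3 * r z') := by
            apply mul_lt_mul_of_pos_left h ht0
        _ = r z := by rw [ht]; field_simp
    have h2 : p ∈ ball z' (3 * r z') := by
      rw [mem_ball, hpz']
      calc (1 - t) * dist z z' < (1 - t) * (r z + 3 * r z') := by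
            apply mul_lt_mul_of_pos_left h (by linarith)
        _ = 3 * r z' := by
            have htsum : t * (r z + 3 * r z') = r z := by rw [ht]; field_simp
            nlinarith [htsum]
    exact (Set.disjoint_left.mp hd h1) h2
  set D := dist x z' with hD
  have hDge : 3 * r z' ≤ D := by
    have h1 : dist z z' ≤ dist z x + dist x z' := dist_triangle z x z'
    have h2 : dist z x ≤ r z := by rwa [dist_comm, ← mem_closedBall]
    linarith
  set a := D - r z' with ha
  set b := D + r z' with hb
  have hapos : 0 < a := by linarith
  have hbpos : 0 < b := by linarith
  have hkey : g a ≤ c * g b := by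
    calc g a ≤ g (b / 2) := hg_dec (by linarith) (by linarith)
      _ ≤ c * g b := hdbl b (by linarith)
  set S := closedBall z' (r z') with hS
  have hSmeas : MeasurableSet S := measurableSet_closedBall
  -- distance bounds on S
  have hdistS : ∀ y ∈ S, a ≤ dist x y ∧ dist x y ≤ b := by
    intro y hy
    rw [hS, mem_closedBall] at hy
    constructor
    · have := dist_triangle x y z'
      linarith
    · have := dist_triangle x z' y
      rw [dist_comm z' y] at this
      linarith
  -- restrict equals original
  have hμres : (μ z').restrict S = μ z' :=
    Measure.restrict_eq_self_of_ae_mem (mem_ae_iff.mpr (hμsupp z' hz'Z))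
  have hνres : (ν z').restrict S = ν z' :=
    Measure.restrict_eq_self_of_ae_mem (mem_ae_iff.mpr (hνsupp z' hz'Z))
  have hμS : μ z' S = μ z' Set.univ := by
    have := measure_add_measure_compl (μ := μ z') hSmeas
    rw [hμsupp z' hz'Z, add_zero] at this
    exact this
  have hνS : ν z' S = ν z' Set.univ := by
    have := measure_add_measure_compl (μ := ν z') hSmeas
    rw [hνsupp z' hz'Z, add_zero] at this
    exact this
  calc ∫⁻ y, ENNReal.ofReal (g (dist x y)) ∂(μ z')
      = ∫⁻ y in S, ENNReal.ofReal (g (dist x y)) ∂(μ z') := by rw [hμres]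
    _ ≤ ∫⁻ _ in S, ENNReal.ofReal (g a) ∂(μ z') := by
        refine lintegral_mono_ae ?_
        filter_upwards [ae_restrict_mem hSmeas] with y hy
        exact ENNReal.ofReal_le_ofReal (hg_dec hapos (hdistS y hy).1)
    _ = ENNReal.ofReal (g a) * μ z' Set.univ := by rw [setLIntegral_const, hμS]
    _ ≤ ENNReal.ofReal c * ENNReal.ofReal (g b) * ν z' Set.univ := by
        refine mul_le_mul' ?_ (hmass z' hz'Z)
        rw [← ENNReal.ofReal_mul (by linarith)]
        exact ENNReal.ofReal_le_ofReal hkey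
    _ = ENNReal.ofReal c * (ENNReal.ofReal (g b) * ν z' Set.univ) := by ring
    _ ≤ ENNReal.ofReal c * ∫⁻ y, ENNReal.ofReal (g (dist x y)) ∂(ν z') := by
        refine mul_le_mul_right ?_ _
        calc ENNReal.ofReal (g b) * ν z' Set.univ
            = ∫⁻ _ in S, ENNReal.ofReal (g b) ∂(ν z') := by rw [setLIntegral_const, hνS]
          _ ≤ ∫⁻ y in S, ENNReal.ofReal (g (dist x y)) ∂(ν z') := by
              refine lintegral_mono_ae ?_
              filter_upwards [ae_restrict_mem hSmeas] with y hy
              refine ENNReal.ofReal_le_ofReal (hg_dec ?_ (hdistS y hy).2)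
              linarith [(hdistS y hy).1]
          _ = _ := by rw [hνres]
end
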